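/- For every graph H and every ε > 0, if Theorem A holds (every ε'-coherent massed graph contains a proper fuzzy odd subdivision of H as an induced subgraph for suitable ε' > 0) and Rödl's theorem holds, then there exists ε > 0 such that for all n > 1, every n-vertex graph containing neither a proper fuzzy odd subdivision of H nor the complement of a proper fuzzy odd subdivision of H as an induced subgraph contains two sets A, B of vertices with |A|, |B| ≥ εn such that A is complete or anticomplete to B. -/

import Mathlib

open SimpleGraph

/-- Sets `A`, `B` are complete to each other: disjoint with all edges between them. -/
def Complete {V : Type} (G : SimpleGraph V) (A B : Set V) : Prop :=
  Disjoint A B ∧ ∀ a ∈ A, ∀ b ∈ B, G.Adj a b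

/-- Sets `A`, `B` are anticomplete: disjoint with no edges between them. -/
def Anticomplete {V : Type} (G : SimpleGraph V) (A B : Set V) : Prop :=
  Disjoint A B ∧ ∀ a ∈ A, ∀ b ∈ B, ¬ G.Adj a b

/-- `V1 = N(u) \ N[v]`. -/
def sideA {V : Type} (G : SimpleGraph V) (u v : V) : Set V :=
  G.neighborSet u \ insert v (G.neighborSet v)

/-- `V2 = N(v) \ N[u]`. -/
def sideB {V : Type} (G : SimpleGraph V) (u v : V) : Set V :=
  G.neighborSet v \ insert u (G.neighborSet u)

/-- `V3 = N(u) ∩ N(v)`. -/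
def sideC {V : Type} (G : SimpleGraph V) (u v : V) : Set V :=
  G.neighborSet u ∩ G.neighborSet v

/-- The pair `{a, b}` crosses one of the three pairs of sets `(V1,V2)`, `(V2,V3)`, `(V1,V3)`. -/
def pivotCross {V : Type} (G : SimpleGraph V) (u v a b : V) : Prop :=
  (a ∈ sideA G u v ∧ b ∈ sideB G u v) ∨ (a ∈ sideB G u v ∧ b ∈ sideA G u v) ∨
  (a ∈ sideB G u v ∧ b ∈ sideC G u v) ∨ (a ∈ sideC G u v ∧ b ∈ sideB G u v) ∨
  (a ∈ sideA G u v ∧ b ∈ sideC G u v) ∨ (a ∈ sideC G u v ∧ b ∈ sideA G u v)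

lemma pivotCross_comm {V : Type} {G : SimpleGraph V} {u v a b : V} :
    pivotCross G u v a b ↔ pivotCross G u v b a := by
  unfold pivotCross; tauto

/-- The pivot `G ∧ uv`: complement the edges between each of the pairs `(V1,V2)`, `(V2,V3)`,
`(V1,V3)` and then swap the labels of `u` and `v`. -/
def pivotGraph {V : Type} (G : SimpleGraph V) (u v : V) : SimpleGraph V :=
  letI := Classical.decEq V
  { Adj := fun x y => x ≠ y ∧
      Xor' (G.Adj (Equiv.swap u v x) (Equiv.swap u v y))
        (pivotCross G u v (Equiv.swap u v x) (Equiv.swap u v y)),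
    symm := ⟨by
      rintro x y ⟨hxy, h⟩
      refine ⟨hxy.symm, ?_⟩
      have h1 : G.Adj (Equiv.swap u v x) (Equiv.swap u v y) ↔
          G.Adj (Equiv.swap u v y) (Equiv.swap u v x) := G.adj_comm _ _
      have h2 : pivotCross G u v (Equiv.swap u v x) (Equiv.swap u v y) ↔
          pivotCross G u v (Equiv.swap u v y) (Equiv.swap u v x) := pivotCross_comm
      unfold Xor' at h ⊢
      rw [← h1, ← h2]; exact h⟩,
    loopless := ⟨fun _ h => h.1 rfl⟩ }

/-- `H` is a pivot-minor of `G`: `H` is obtainable from `G` (up to isomorphism) by a sequence of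
vertex deletions and pivots of edges. -/
inductive IsPivotMinor : ∀ {W U : Type}, SimpleGraph W → SimpleGraph U → Prop
  | of_iso {W U : Type} {H : SimpleGraph W} {G : SimpleGraph U} :
      Nonempty (H ≃g G) → IsPivotMinor H G
  | pivot {W U : Type} {H : SimpleGraph W} {G : SimpleGraph U} (u v : U) :
      G.Adj u v → IsPivotMinor H (pivotGraph G u v) → IsPivotMinor H G
  | delete {W U : Type} {H : SimpleGraph W} {G : SimpleGraph U} (s : Set U) :
      IsPivotMinor H (G.induce s) → IsPivotMinor H G

/-- `G` is obtained from `H` by replacing each edge `uv` of `H` with a path whose length satisfies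
`P u v h`: there are internally disjoint induced paths of `G` joining the images of the branch
vertices, covering all of `G`, whose edges are exactly the edges of `G`. -/
def IsEdgeReplacement {U W : Type} (H : SimpleGraph U)
    (P : ∀ u v : U, H.Adj u v → ℕ → Prop) (G : SimpleGraph W) : Prop :=
  ∃ (x : U ↪ W) (p : ∀ u v : U, H.Adj u v → G.Walk (x u) (x v)),
    (∀ u v h, (p u v h).IsPath) ∧
    (∀ u v h, P u v h (p u v h).length) ∧
    (∀ u v h, p v u h.symm = (p u v h).reverse) ∧
    (∀ u v h w, w ∈ (p u v h).support → w ∈ Set.range x → w = x u ∨ w = x v) ∧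
    (∀ u v h k l h', s(u, v) ≠ s(k, l) →
      ∀ w, w ∈ (p u v h).support → w ∈ (p k l h').support → w ∈ Set.range x) ∧
    (∀ w : W, w ∈ Set.range x ∨ ∃ u v h, w ∈ (p u v h).support) ∧
    (∀ a b : W, G.Adj a b ↔ ∃ u v h, (p u v h).toSubgraph.Adj a b)

/-- `G` is obtained from `H` by replacing each edge with a path whose length satisfies `P`. -/
def IsSubdivisionWith {U W : Type} (H : SimpleGraph U) (P : ℕ → Prop) (G : SimpleGraph W) : Prop :=
  IsEdgeReplacement H (fun _ _ _ n => P n) G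

/-- An `F`-filleting of `G`: subdivide (at least once) every edge of `G` not in `F`, and do not
subdivide the edges of `F`. -/
def IsFilleting {U W : Type} (G F : SimpleGraph U) (H : SimpleGraph W) : Prop :=
  IsEdgeReplacement G (fun u v _ n => (F.Adj u v ∧ n = 1) ∨ (¬ F.Adj u v ∧ 2 ≤ n)) H

/-- Join of `H` with a single new vertex (`H + K_1`), the new vertex being `none`. -/
def addApex {W : Type} (H : SimpleGraph W) : SimpleGraph (Option W) :=
  SimpleGraph.fromRel fun a b =>
    a = none ∨ ∃ u v : W, a = some u ∧ b = some v ∧ H.Adj u v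

/-- `F` with ends `a`, `b` is a fuzzy odd path (with length satisfying `P`): it consists of an odd
path from `a` to `b` through all the vertices, possibly together with one extra edge `xy` between
two internal vertices such that `xy` lies in a triangle. -/
def IsFuzzyOddPath {T : Type} (F : SimpleGraph T) (a b : T) (P : ℕ → Prop) : Prop :=
  ∃ p : F.Walk a b, p.IsPath ∧ Odd p.length ∧ P p.length ∧ (∀ t : T, t ∈ p.support) ∧
    ((∀ c d : T, F.Adj c d ↔ p.toSubgraph.Adj c d) ∨
      ∃ x y : T, x ∈ p.support ∧ y ∈ p.support ∧ x ≠ a ∧ x ≠ b ∧ y ≠ a ∧ y ≠ b ∧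
        F.Adj x y ∧ ¬ p.toSubgraph.Adj x y ∧ (∃ z : T, F.Adj x z ∧ F.Adj y z) ∧
        (∀ c d : T, F.Adj c d ↔ (p.toSubgraph.Adj c d ∨ (c = x ∧ d = y) ∨ (c = y ∧ d = x))))

/-- `G` is a proper fuzzy odd subdivision of `H`: `G` is obtained from `H` by replacing each edge
with a fuzzy odd path of (odd) length at least `3`. -/
def IsProperFuzzyOddSubdivision {U W : Type} (H : SimpleGraph U) (G : SimpleGraph W) : Prop :=
  ∃ (x : U ↪ W) (S : ∀ u v : U, H.Adj u v → Set W)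
    (hS : ∀ u v h, x u ∈ S u v h ∧ x v ∈ S u v h),
    (∀ u v h, S v u h.symm = S u v h) ∧
    (∀ u v h w, w ∈ S u v h → w ∈ Set.range x → w = x u ∨ w = x v) ∧
    (∀ u v h k l h', s(u, v) ≠ s(k, l) → ∀ w, w ∈ S u v h → w ∈ S k l h' → w ∈ Set.range x) ∧
    (∀ w : W, w ∈ Set.range x ∨ ∃ u v h, w ∈ S u v h) ∧
    (∀ a b : W, G.Adj a b → ∃ u v h, a ∈ S u v h ∧ b ∈ S u v h) ∧
    (∀ u v h, IsFuzzyOddPath (G.induce (S u v h))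
      ⟨x u, (hS u v h).1⟩ ⟨x v, (hS u v h).2⟩ (fun n => 3 ≤ n))

/-- A mass on a graph `G`. -/
structure IsMass {V : Type} (G : SimpleGraph V) (μ : Set V → ℝ) : Prop where
  map_empty : μ ∅ = 0
  map_univ : μ Set.univ = 1
  mono : ∀ ⦃X Y : Set V⦄, X ⊆ Y → μ X ≤ μ Y
  subadditive : ∀ X Y : Set V, μ (X ∪ Y) ≤ μ X + μ Y

/-- `N^r[v]`: the ball of radius `r` about `v`. -/
def ball {V : Type} (G : SimpleGraph V) (v : V) (r : ℕ) : Set V :=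
  {w | ∃ p : G.Walk v w, p.length ≤ r}

/-- `(G, μ)` is `ε`-coherent. -/
def EpsCoherent {V : Type} (G : SimpleGraph V) (μ : Set V → ℝ) (ε : ℝ) : Prop :=
  (∀ v : V, μ {v} < ε) ∧ (∀ v : V, μ (G.neighborSet v) < ε) ∧
  ∀ A B : Set V, Anticomplete G A B → min (μ A) (μ B) < ε

/-- `(G, μ)` is `(ε, r)`-coherent. -/
def EpsRCoherent {V : Type} (G : SimpleGraph V) (μ : Set V → ℝ) (ε : ℝ) (r : ℕ) : Prop :=
  (∀ v : V, μ (_root_.ball G v r) < ε) ∧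
  ∀ A B : Set V, Anticomplete G A B → min (μ A) (μ B) < ε

/-- `(G, μ)` is `(δ, r)`-focused. -/
def Focused {V : Type} (G : SimpleGraph V) (μ : Set V → ℝ) (δ : ℝ) (r : ℕ) : Prop :=
  ∀ Z : Set V, δ ≤ μ Z → ∃ v : Z, μ Z / 2 ≤ μ (Subtype.val '' _root_.ball (G.induce Z) v r)

/-- `N[X]`. -/
def closedNbhd {V : Type} (G : SimpleGraph V) (X : Set V) : Set V :=
  X ∪ {w | ∃ a ∈ X, G.Adj a w}

/-- `x` is an `r`-centre of `X`: every vertex of `X` is within distance `r` of `x` in `G[X]`. -/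
def IsCentre {V : Type} (G : SimpleGraph V) (X : Set V) (x : V) (hx : x ∈ X) (r : ℕ) : Prop :=
  ∀ y : X, ∃ p : (G.induce X).Walk ⟨x, hx⟩ y, p.length ≤ r

/-- A leaf: a vertex of degree at most 1. -/
def IsLeaf {V : Type} (G : SimpleGraph V) (v : V) : Prop := (G.neighborSet v).Subsingleton

/-- `P` is a path graph. -/
def IsPathGraph {U : Type} (P : SimpleGraph U) : Prop :=
  ∃ (a b : U) (w : P.Walk a b), w.IsPath ∧ (∀ u : U, u ∈ w.support) ∧
    ∀ x y : U, P.Adj x y ↔ w.toSubgraph.Adj x y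

/-- A caterpillar: a tree `T` such that `T − L(T)` is a path. -/
def IsCaterpillar {U : Type} (T : SimpleGraph U) : Prop :=
  T.IsTree ∧ IsPathGraph (T.induce {v | ¬ IsLeaf T v})

/-- Disjoint union of `q` stars, each with `p` leaves: `(i, none)` is the centre of the `i`-th
star and `(i, some j)` its leaves. -/
def starForest (q p : ℕ) : SimpleGraph (Fin q × Option (Fin p)) :=
  SimpleGraph.fromRel fun a b => a.1 = b.1 ∧ a.2 = none ∧ b.2 ≠ none

/-- The clique number `ω(G)`. -/
noncomputable def cliqueNumber {V : Type} [Fintype V] (G : SimpleGraph V) : ℕ :=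
  sSup {n | ∃ s : Finset V, G.IsNClique n s}

/-- The independence number `α(G)`. -/
noncomputable def indepNumber {V : Type} [Fintype V] (G : SimpleGraph V) : ℕ :=
  cliqueNumber Gᶜ

/-!
Apply Rödl's theorem to the graph obtained from `H` by replacing every edge with a path of length
three, itself a proper fuzzy odd subdivision of `H`: it gives a set `X` of linear size on which `G`
or its complement has all degrees below `ε' |X|`. That sparse graph on `X` has no induced proper
fuzzy odd subdivision of `H`, so by Theorem A it is not `ε'`-coherent under the uniform mass. Its
singletons and neighbourhoods are light, so the failure is an anticomplete pair with both sides of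
size at least `ε' |X|`: an anticomplete or a complete pair of `G`. Graphs with `δ ε' n ≤ 1` are
handled by two single vertices.
-/

section Transport

variable {U W₁ W₂ : Type} {F₁ : SimpleGraph W₁} {F₂ : SimpleGraph W₂}

lemma SimpleGraph.Walk.toSubgraph_map_adj_of_injective {f : F₁ →g F₂}
    (hf : Function.Injective f) {a b : W₁} (p : F₁.Walk a b) (c d : W₁) :
    (p.map f).toSubgraph.Adj (f c) (f d) ↔ p.toSubgraph.Adj c d := by
  rw [Walk.toSubgraph_map, Subgraph.map_adj]
  exact Relation.map_apply_apply hf hf _ c d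

lemma SimpleGraph.Walk.toSubgraph_map_iso_adj (e : F₁ ≃g F₂) {a b : W₁} (p : F₁.Walk a b)
    (c d : W₁) : (p.map e.toHom).toSubgraph.Adj (e c) (e d) ↔ p.toSubgraph.Adj c d :=
  p.toSubgraph_map_adj_of_injective e.injective c d

lemma IsFuzzyOddPath.map_iso (e : F₁ ≃g F₂) {a b : W₁} {P : ℕ → Prop}
    (h : IsFuzzyOddPath F₁ a b P) : IsFuzzyOddPath F₂ (e a) (e b) P := by
  obtain ⟨p, hp, hodd, hP, hsupp, hadj⟩ := h
  have hmem : ∀ {t : W₁}, t ∈ p.support → e t ∈ (p.map e.toHom).support := fun ht => by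
    rw [Walk.support_map]; exact List.mem_map_of_mem ht
  refine ⟨p.map e.toHom, hp.map e.injective, by simpa, by simpa, fun t => ?_, ?_⟩
  · simpa using hmem (hsupp (e.symm t))
  simp only [e.surjective.forall₂, e.map_adj_iff, Walk.toSubgraph_map_iso_adj e]
  rcases hadj with hadj | ⟨x, y, hx, hy, hxa, hxb, hya, hyb, hxy, hxy', ⟨z, hxz, hyz⟩, hadj⟩
  · exact .inl hadj
  refine .inr ⟨e x, e y, hmem hx, hmem hy, ?_⟩
  simp only [e.injective.ne_iff, e.map_adj_iff, Walk.toSubgraph_map_iso_adj e, e.injective.eq_iff]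
  exact ⟨hxa, hxb, hya, hyb, hxy, hxy', ⟨e z, e.map_adj_iff.2 hxz, e.map_adj_iff.2 hyz⟩,
    hadj⟩

def SimpleGraph.Iso.induceImage (e : F₁ ≃g F₂) (s : Set W₁) :
    F₁.induce s ≃g F₂.induce (e '' s) where
  toEquiv := e.toEquiv.image s
  map_rel_iff' := e.map_adj_iff

lemma IsProperFuzzyOddSubdivision.map_iso {H : SimpleGraph U} (e : F₁ ≃g F₂)
    (h : IsProperFuzzyOddSubdivision H F₁) : IsProperFuzzyOddSubdivision H F₂ := by
  obtain ⟨x, S, hS, hsymm, hbranch, hcross, hcover, hadj, hpath⟩ := h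
  have hrange : ∀ {w : W₁}, e w ∈ Set.range (x.trans e.toEquiv.toEmbedding) →
      w ∈ Set.range x :=
    fun ⟨u, hu⟩ => ⟨u, e.injective hu⟩
  refine ⟨x.trans e.toEquiv.toEmbedding, fun u v h => e '' S u v h,
    fun u v h => ⟨Set.mem_image_of_mem e (hS u v h).1, Set.mem_image_of_mem e (hS u v h).2⟩,
    fun u v h => congrArg (e '' ·) (hsymm u v h), ?_, ?_, fun w => ?_, fun a b hab => ?_,
    fun u v h => ?_⟩
  · rintro u v h _ ⟨w, hw, rfl⟩ hwx
    exact (hbranch u v h w hw (hrange hwx)).imp (congrArg e) (congrArg e)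
  · rintro u v h k l h' huv _ ⟨w, hw, rfl⟩ ⟨w', hw', hww'⟩
    obtain ⟨t, rfl⟩ := hcross u v h k l h' huv w hw (e.injective hww' ▸ hw')
    exact ⟨t, rfl⟩
  · rcases hcover (e.symm w) with ⟨u, hu⟩ | ⟨u, v, h, hw⟩
    · exact .inl ⟨u, by simp [hu]⟩
    · exact .inr ⟨u, v, h, e.symm w, hw, by simp⟩
  · obtain ⟨u, v, h, ha, hb⟩ := hadj _ _ (e.symm.map_adj_iff.2 hab)
    exact ⟨u, v, h, ⟨_, ha, by simp⟩, ⟨_, hb, by simp⟩⟩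
  · exact (hpath u v h).map_iso (e.induceImage (S u v h))

end Transport

section InducedCopies

variable {U W₁ W₂ : Type} {H : SimpleGraph U} {F : SimpleGraph W₁} {G : SimpleGraph W₂}

lemma SimpleGraph.induce_compl (G : SimpleGraph W₂) (s : Set W₂) :
    Gᶜ.induce s = (G.induce s)ᶜ := by
  ext a b
  simp [Subtype.ext_iff]

lemma IsProperFuzzyOddSubdivision.exists_induce_of_isIndContained
    (hF : IsProperFuzzyOddSubdivision H F) (h : F ⊴ G) :
    ∃ S : Set W₂, IsProperFuzzyOddSubdivision H (G.induce S) := by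
  obtain ⟨S, ⟨e⟩⟩ := isIndContained_iff_exists_iso_induce.1 h
  exact ⟨S, hF.map_iso e⟩

lemma SimpleGraph.IsIndContained.exists_induce_properFuzzyOddSubdivision (h : F ⊴ G)
    (hF : ∃ S : Set W₁, IsProperFuzzyOddSubdivision H (F.induce S)) :
    ∃ S : Set W₂, IsProperFuzzyOddSubdivision H (G.induce S) :=
  let ⟨S, hS⟩ := hF
  hS.exists_induce_of_isIndContained (IsIndContained.trans ⟨Embedding.induce S⟩ h)

lemma exists_compl_induce_of_exists_compl_induce_induce {X : Set W₂}
    (h : ∃ S : Set X, IsProperFuzzyOddSubdivision H ((G.induce X)ᶜ.induce S)) :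
    ∃ S : Set W₂, IsProperFuzzyOddSubdivision H ((G.induce S)ᶜ) := by
  obtain ⟨S, hS⟩ := IsIndContained.exists_induce_properFuzzyOddSubdivision
    ⟨Embedding.complEquiv (Embedding.induce X)⟩ h
  exact ⟨S, induce_compl G S ▸ hS⟩

end InducedCopies

lemma SimpleGraph.Walk.IsPath.isFuzzyOddPath_induce {V : Type} {G : SimpleGraph V} {a b : V}
    {p : G.Walk a b} {P : ℕ → Prop} (hp : p.IsPath) (hc : p.IsChordless) (hodd : Odd p.length)
    (hP : P p.length) {s : Set V} (hs : ∀ v, v ∈ s ↔ v ∈ p.support) :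
    IsFuzzyOddPath (G.induce s) ⟨a, (hs a).2 p.start_mem_support⟩
      ⟨b, (hs b).2 p.end_mem_support⟩ P := by
  have ha := (hs a).2 p.start_mem_support
  have hb := (hs b).2 p.end_mem_support
  let f : G.induce s ↪g G := Embedding.induce s
  obtain ⟨q, hq⟩ : ∃ q : (G.induce s).Walk ⟨a, ha⟩ ⟨b, hb⟩, q.map f.toHom = p :=
    ⟨_, p.map_induce fun v => (hs v).2⟩
  have hlen : q.length = p.length := (q.length_map _).symm.trans (congrArg Walk.length hq)
  have hadj : ∀ c d : s, (G.induce s).Adj c d ↔ q.toSubgraph.Adj c d := fun c d => by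
    refine Iff.trans ?_ (q.toSubgraph_map_adj_of_injective (f := f.toHom) f.injective c d)
    refine Iff.trans ?_ (Iff.of_eq (congrArg (fun r => r.toSubgraph.Adj c.1 d.1) hq)).symm
    exact ⟨fun h => Walk.adj_toSubgraph_iff_mem_edges.2
      (hc.mem_edges ((hs c).1 c.2) ((hs d).1 d.2) h), fun h => h.adj_sub⟩
  refine ⟨q, (hq ▸ hp).of_map, hlen ▸ hodd, hlen ▸ hP, fun t => ?_, .inl hadj⟩
  have ht := (congrArg (fun r => (t : V) ∈ r.support) hq).mpr ((hs t).1 t.2)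
  obtain ⟨t', ht', htt'⟩ := List.mem_map.1 (by rwa [Walk.support_map] at ht)
  exact Subtype.ext htt' ▸ ht'

section ThreeSubdivision

variable {U : Type} (H : SimpleGraph U)

/-- Each edge `uv` of `H` becomes the path `u, (u,v), (v,u), v`: the internal vertices are the
darts of `H`, the dart `(u,v)` being the one next to `u`. -/
def threeSubdivision : SimpleGraph (U ⊕ H.Dart) where
  Adj
    | .inl u, .inr d => d.fst = u
    | .inr d, .inl u => d.fst = u
    | .inr d, .inr d' => d' = d.symm
    | .inl _, .inl _ => False
  symm := ⟨by
    rintro (u | d) (v | d') h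
    exacts [h, h, h, h ▸ d.symm_symm.symm]⟩
  loopless := ⟨by
    rintro (u | d) h
    exacts [h, d.symm_ne h.symm]⟩

variable {H}

@[simp] lemma threeSubdivision_adj_inl_inl {u v : U} :
    ¬ (threeSubdivision H).Adj (.inl u) (.inl v) := id

@[simp] lemma threeSubdivision_adj_inl_inr {u : U} {d : H.Dart} :
    (threeSubdivision H).Adj (.inl u) (.inr d) ↔ d.fst = u := .rfl

@[simp] lemma threeSubdivision_adj_inr_inl {u : U} {d : H.Dart} :
    (threeSubdivision H).Adj (.inr d) (.inl u) ↔ d.fst = u := .rfl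

@[simp] lemma threeSubdivision_adj_inr_inr {d d' : H.Dart} :
    (threeSubdivision H).Adj (.inr d) (.inr d') ↔ d' = d.symm := .rfl

def dartWalk (d : H.Dart) : (threeSubdivision H).Walk (.inl d.fst) (.inl d.snd) :=
  .cons (threeSubdivision_adj_inl_inr (d := d).2 rfl) <|
    .cons (threeSubdivision_adj_inr_inr (d' := d.symm).2 rfl) <|
    .cons (threeSubdivision_adj_inr_inl (d := d.symm).2 rfl) .nil

lemma dartWalk_support (d : H.Dart) :
    (dartWalk d).support = [.inl d.fst, .inr d, .inr d.symm, .inl d.snd] := rfl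

lemma dartWalk_edges (d : H.Dart) :
    (dartWalk d).edges =
      [s(.inl d.fst, .inr d), s(.inr d, .inr d.symm), s(.inr d.symm, .inl d.snd)] := rfl

lemma dartWalk_isPath (d : H.Dart) : (dartWalk d).IsPath := by
  rw [Walk.isPath_def, dartWalk_support]
  simp [d.fst_ne_snd, d.symm_ne.symm]

lemma dartWalk_isChordless (d : H.Dart) : (dartWalk d).IsChordless := by
  rw [Walk.isChordless_iff_forall_mem_edges, dartWalk_support, dartWalk_edges]
  simp only [List.mem_cons, List.not_mem_nil, or_false]
  rintro _ _ (rfl | rfl | rfl | rfl) (rfl | rfl | rfl | rfl) h <;> simp_all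

end ThreeSubdivision

lemma isProperFuzzyOddSubdivision_threeSubdivision {U : Type} (H : SimpleGraph U) :
    IsProperFuzzyOddSubdivision H (threeSubdivision H) := by
  let S (u v : U) (h : H.Adj u v) : Set (U ⊕ H.Dart) :=
    {w | w ∈ (dartWalk ⟨(u, v), h⟩).support}
  have hS {u v : U} {h : H.Adj u v} {w : U ⊕ H.Dart} : w ∈ S u v h ↔
      w = .inl u ∨ w = .inr ⟨(u, v), h⟩ ∨ w = .inr ⟨(v, u), h.symm⟩ ∨ w = .inl v := by
    simp [S, dartWalk_support]
  refine ⟨⟨Sum.inl, Sum.inl_injective⟩, S, fun u v h => ⟨hS.2 (.inl rfl),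
    hS.2 (.inr (.inr (.inr rfl)))⟩, fun u v h => ?_, ?_, ?_, ?_, ?_, fun u v h =>
    (dartWalk_isPath _).isFuzzyOddPath_induce (dartWalk_isChordless _) ⟨1, rfl⟩ le_rfl
      fun _ => .rfl⟩
  · ext w; simp only [hS]; tauto
  · rintro u v h w hw ⟨t, rfl⟩
    simpa [hS] using hw
  · rintro u v h k l h' hne (t | e) hw hw'
    · exact ⟨t, rfl⟩
    simp only [hS, reduceCtorEq, Sum.inr.injEq, false_or, or_false] at hw hw'
    rcases hw with rfl | rfl <;> rcases hw' with h₁ | h₁ <;>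
      simp_all [Dart.ext_iff]
  · rintro (t | e)
    · exact .inl ⟨t, rfl⟩
    · exact .inr ⟨e.fst, e.snd, e.adj, hS.2 (.inr (.inl rfl))⟩
  · rintro (a | d) (b | d') hab
    · exact hab.elim
    · exact ⟨d'.fst, d'.snd, d'.adj, hS.2 (.inl (by simp_all)), hS.2 (.inr (.inl rfl))⟩
    · exact ⟨d.fst, d.snd, d.adj, hS.2 (.inr (.inl rfl)), hS.2 (.inl (by simp_all))⟩
    · subst hab
      exact ⟨d.fst, d.snd, d.adj, hS.2 (.inr (.inl rfl)), hS.2 (.inr (.inr (.inl rfl)))⟩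

section UniformMass

variable {W : Type}

noncomputable def uniformMass (W : Type) (Y : Set W) : ℝ := Y.ncard / Nat.card W

lemma nonempty_of_one_lt_mul_natCard {ε : ℝ} (h : 1 < ε * Nat.card W) : Nonempty W :=
  (Nat.card_pos_iff.1 <| Nat.pos_of_ne_zero fun h₀ => by norm_num [h₀] at h).1

variable [Finite W]

lemma isMass_uniformMass [Nonempty W] (G : SimpleGraph W) : IsMass G (uniformMass W) where
  map_empty := by simp [uniformMass]
  map_univ := by simp [uniformMass, Set.ncard_univ]
  mono _ Y hXY := by
    unfold uniformMass; gcongr; exact Y.toFinite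
  subadditive X Y := by
    unfold uniformMass; rw [← add_div]; gcongr; exact_mod_cast Set.ncard_union_le X Y

lemma uniformMass_lt_iff [Nonempty W] {Y : Set W} {ε : ℝ} :
    uniformMass W Y < ε ↔ (Y.ncard : ℝ) < ε * Nat.card W :=
  div_lt_iff₀ (by exact_mod_cast Nat.card_pos)

lemma epsCoherent_uniformMass {G : SimpleGraph W} {ε : ℝ} (hcard : 1 < ε * Nat.card W)
    (hdeg : ∀ v, ((G.neighborSet v).ncard : ℝ) < ε * Nat.card W)
    (hanti : ∀ A B, Anticomplete G A B → ε * Nat.card W ≤ A.ncard →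
      (B.ncard : ℝ) < ε * Nat.card W) :
    EpsCoherent G (uniformMass W) ε := by
  have := nonempty_of_one_lt_mul_natCard hcard
  refine ⟨fun v => ?_, fun v => uniformMass_lt_iff.2 (hdeg v), fun A B hAB => ?_⟩
  · simpa [uniformMass_lt_iff] using hcard
  · rw [min_lt_iff, uniformMass_lt_iff, uniformMass_lt_iff]
    by_cases hA : (A.ncard : ℝ) < ε * Nat.card W
    · exact .inl hA
    · exact .inr (hanti A B hAB (not_lt.1 hA))

end UniformMass

lemma exists_large_anticomplete_of_sparse {U W : Type} [Finite W] {H : SimpleGraph U} {ε : ℝ}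
    (thmA : ∀ (V : Type) [Fintype V] (G : SimpleGraph V) (μ : Set V → ℝ),
      IsMass G μ → EpsCoherent G μ ε →
      ∃ S : Set V, IsProperFuzzyOddSubdivision H (G.induce S))
    {G : SimpleGraph W} (hfree : ¬ ∃ S : Set W, IsProperFuzzyOddSubdivision H (G.induce S))
    (hcard : 1 < ε * Nat.card W)
    (hdeg : ∀ v, ((G.neighborSet v).ncard : ℝ) < ε * Nat.card W) :
    ∃ A B : Set W, Anticomplete G A B ∧
      ε * Nat.card W ≤ A.ncard ∧ ε * Nat.card W ≤ B.ncard := by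
  by_contra! hanti
  have := nonempty_of_one_lt_mul_natCard hcard
  have := Fintype.ofFinite W
  exact hfree <| thmA W G _ (isMass_uniformMass G) (epsCoherent_uniformMass hcard hdeg hanti)

section Homogeneous

variable {V W : Type} {G : SimpleGraph V} {G' : SimpleGraph W} {A B : Set V}

lemma anticomplete_compl_iff : Anticomplete Gᶜ A B ↔ Complete G A B := by
  refine and_congr_right fun hAB => forall₂_congr fun a ha => forall₂_congr fun b hb => ?_
  rw [compl_adj, not_and_not_right]
  exact imp_iff_right (Set.disjoint_left.1 hAB ha <| · ▸ hb)

lemma Complete.map (f : G ↪g G') (h : Complete G A B) : Complete G' (f '' A) (f '' B) := by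
  refine ⟨(Set.disjoint_image_iff f.injective).2 h.1, ?_⟩
  rintro _ ⟨a, ha, rfl⟩ _ ⟨b, hb, rfl⟩
  exact f.map_adj_iff.2 (h.2 a ha b hb)

lemma Anticomplete.map (f : G ↪g G') (h : Anticomplete G A B) :
    Anticomplete G' (f '' A) (f '' B) := by
  refine ⟨(Set.disjoint_image_iff f.injective).2 h.1, ?_⟩
  rintro _ ⟨a, ha, rfl⟩ _ ⟨b, hb, rfl⟩
  exact mt f.map_adj_iff.1 (h.2 a ha b hb)

lemma complete_or_anticomplete_singleton {a b : V} (hab : a ≠ b) :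
    Complete G {a} {b} ∨ Anticomplete G {a} {b} := by
  have hdisj : Disjoint ({a} : Set V) {b} := Set.disjoint_singleton.2 hab
  by_cases h : G.Adj a b
  · exact .inl ⟨hdisj, by simpa using h⟩
  · exact .inr ⟨hdisj, by simpa using h⟩

end Homogeneous

/-- assuming Theorem A (the coherent massed-graph theorem for `H`) and Rödl's
theorem, every graph with no induced proper fuzzy odd subdivision of `H` nor complement of one has
the strong Erdős–Hajnal conclusion. -/
theorem strongEH_from_thmA_and_rodl {V0 : Type} [Fintype V0] (H : SimpleGraph V0)
    (thmA : ∃ ε' : ℝ, 0 < ε' ∧ ∀ (V : Type) [Fintype V] (G : SimpleGraph V) (μ : Set V → ℝ),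
      IsMass G μ → EpsCoherent G μ ε' →
      ∃ S : Set V, IsProperFuzzyOddSubdivision H (G.induce S))
    (rodl : ∀ (W0 : Type) [Fintype W0] (H' : SimpleGraph W0) (ε' : ℝ), 0 < ε' →
      ∃ δ : ℝ, 0 < δ ∧ ∀ (V : Type) [Fintype V] (G : SimpleGraph V),
        (¬ ∃ S : Set V, Nonempty (H' ≃g G.induce S)) →
        ∃ X : Set V, δ * (Fintype.card V : ℝ) ≤ (X.ncard : ℝ) ∧
          ((∀ v : X, (((G.induce X).neighborSet v).ncard : ℝ) < ε' * (X.ncard : ℝ)) ∨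
           (∀ v : X, ((((G.induce X)ᶜ).neighborSet v).ncard : ℝ) < ε' * (X.ncard : ℝ)))) :
    ∃ ε : ℝ, 0 < ε ∧ ∀ (V : Type) [Fintype V] (G : SimpleGraph V), 1 < Fintype.card V →
      (¬ ∃ S : Set V, IsProperFuzzyOddSubdivision H (G.induce S)) →
      (¬ ∃ S : Set V, IsProperFuzzyOddSubdivision H ((G.induce S)ᶜ)) →
      ∃ A B : Set V, ε * (Fintype.card V : ℝ) ≤ (A.ncard : ℝ) ∧
        ε * (Fintype.card V : ℝ) ≤ (B.ncard : ℝ) ∧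
        (Complete G A B ∨ Anticomplete G A B) := by
  classical
  obtain ⟨εA, hεA, thmA⟩ := thmA
  obtain ⟨δ, hδ, rodl⟩ := rodl _ (threeSubdivision H) εA hεA
  refine ⟨δ * εA, by positivity, fun V _ G hV hfree hfree' => ?_⟩
  by_cases hsmall : δ * εA * Fintype.card V ≤ 1
  · obtain ⟨a, b, hab⟩ := Fintype.exists_pair_of_one_lt_card hV
    exact ⟨{a}, {b}, by simpa using hsmall, by simpa using hsmall,
      complete_or_anticomplete_singleton hab⟩
  obtain ⟨X, hX, hsparse⟩ := rodl V G fun h => hfree <|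
    (isProperFuzzyOddSubdivision_threeSubdivision H).exists_induce_of_isIndContained
      (isIndContained_iff_exists_iso_induce.2 h)
  rw [← Nat.card_coe_set_eq] at hX hsparse
  have hbig : 1 < εA * Nat.card X := by nlinarith
  have hlarge {A : Set X} (hA : εA * Nat.card X ≤ A.ncard) :
      δ * εA * Fintype.card V ≤ (Subtype.val '' A).ncard := by
    rw [Set.ncard_image_of_injective A Subtype.val_injective]
    nlinarith
  rcases hsparse with hsparse | hsparse
  · obtain ⟨A, B, hAB, hA, hB⟩ := exists_large_anticomplete_of_sparse thmA
      (mt (IsIndContained.exists_induce_properFuzzyOddSubdivision ⟨Embedding.induce X⟩) hfree)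
      hbig hsparse
    exact ⟨_, _, hlarge hA, hlarge hB, .inr (hAB.map (Embedding.induce X))⟩
  · obtain ⟨A, B, hAB, hA, hB⟩ := exists_large_anticomplete_of_sparse thmA
      (mt exists_compl_induce_of_exists_compl_induce_induce hfree') hbig hsparse
    exact ⟨_, _, hlarge hA, hlarge hB,
      .inl ((anticomplete_compl_iff.1 hAB).map (Embedding.induce X))⟩
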